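/- arXiv:1504.02811 — 3 statements merged into one kernel-verified Lean document; each statement's English description precedes it below -/
import Mathlib

section
/- Assume the interval J = (a,b) is of negative type and T is continuously differentiable on (a,b). Then for every k ∈ {1,…,n} there exists λ_k ∈ (a,b) that is the k-th eigenvalue of T(·) (zero is the k-th largest eigenvalue, counted with multiplicity, of the Hermitian matrix T(λ_k)), and λ_k satisfies the max-min characterizations: λ_k equals the maximum over all ℂ-subspaces S ⊆ ℂ^n with dim S = k of the minimum of ρ(x) over nonzero x ∈ S, and λ_k also equals the minimum over all ℂ-subspaces S ⊆ ℂ^n with dim S = n−k+1 of the maximum of ρ(x) over nonzero x ∈ S (all the indicated extrema are attained). -/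
open Matrix Set
open scoped ComplexOrder

/-- `0` is the `k`-th largest eigenvalue (counted with multiplicity, `k` zero-based)
of the matrix `A`: the eigenvalues of `A` can be listed in decreasing order with
multiplicity (as the roots of the characteristic polynomial) so that the `k`-th
entry is `0`. -/
def ZeroIsKthLargestEigenvalue {m : ℕ} (A : Matrix (Fin m) (Fin m) ℂ) (k : Fin m) : Prop :=
  ∃ μ : Fin m → ℝ, Antitone μ ∧
    A.charpoly = ∏ i : Fin m, (Polynomial.X - Polynomial.C ((μ i : ℂ))) ∧ μ k = 0

/-!
On an interval of negative type, `μ < ρ x` holds exactly when `x* T(μ) x > 0`, so comparing `μ`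
with the Rayleigh functional on a subspace amounts to knowing the sign of the form of `T(μ)`
there. Let `λ` be the supremum over `(k+1)`-dimensional subspaces `S` of `min_S ρ`, and let
`e₀ ≥ … ≥ e_{n-1}` be the eigenvalues of `T(λ)` with orthonormal eigenvectors `w_i`. If `e_k > 0`,
the form is positive definite on `span {w_i | i ≤ k}`, so the minimum of `ρ` there exceeds `λ`;
if `e_k < 0`, it is negative definite on `span {w_i | i ≥ k}`, of dimension `n - k`, which meets
every `(k+1)`-dimensional subspace, so `λ` would not be the supremum. Hence `e_k = 0`, and the same
two spans, on which `ρ ≥ λ` and `ρ ≤ λ` respectively, realise both extremal characterisations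
with `ρ(w_k) = λ`. All extrema are attained because `ρ` is scale invariant, so on a subspace it
takes the same values as on the compact unit sphere of that subspace.
-/

open Module

section Punctured

variable {K E : Type*} [DivisionRing K] [AddCommGroup E] [Module K E] [FiniteDimensional K E]
  {f : E → ℝ} {S V : Submodule K E} {r μ : ℝ}

lemma Submodule.exists_mem_inf_ne_zero_of_finrank_lt
    (h : finrank K E < finrank K S + finrank K V) : ∃ x ∈ S, x ∈ V ∧ x ≠ 0 := by
  have hsup := Submodule.finrank_sup_add_finrank_inf_eq S V
  have hle : finrank K ↥(S ⊔ V) ≤ finrank K E := Submodule.finrank_le _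
  have hinf : S ⊓ V ≠ ⊥ := fun h0 => by
    rw [h0, finrank_bot] at hsup
    omega
  obtain ⟨x, hx, hx0⟩ := Submodule.exists_mem_ne_zero_of_ne_bot hinf
  exact ⟨x, hx.1, hx.2, hx0⟩

lemma nonempty_image_punctured (hS : 0 < finrank K S) :
    (f '' {x | x ∈ S ∧ x ≠ 0}).Nonempty := by
  obtain ⟨x, hxS, hx⟩ := Submodule.exists_mem_ne_zero_of_ne_bot
    (Submodule.one_le_finrank_iff.mp hS)
  exact ⟨f x, x, ⟨hxS, hx⟩, rfl⟩

lemma le_of_mem_lowerBounds_of_finrank_lt (h : finrank K E < finrank K S + finrank K V)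
    (hr : r ∈ lowerBounds (f '' {x | x ∈ S ∧ x ≠ 0})) (hV : ∀ x ∈ V, x ≠ 0 → f x ≤ μ) :
    r ≤ μ := by
  obtain ⟨x, hxS, hxV, hx0⟩ := Submodule.exists_mem_inf_ne_zero_of_finrank_lt h
  exact (hr ⟨x, ⟨hxS, hx0⟩, rfl⟩).trans (hV x hxV hx0)

lemma le_of_mem_upperBounds_of_finrank_lt (h : finrank K E < finrank K S + finrank K V)
    (hr : r ∈ upperBounds (f '' {x | x ∈ S ∧ x ≠ 0})) (hV : ∀ x ∈ V, x ≠ 0 → μ ≤ f x) :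
    μ ≤ r := by
  obtain ⟨x, hxS, hxV, hx0⟩ := Submodule.exists_mem_inf_ne_zero_of_finrank_lt h
  exact (hV x hxV hx0).trans (hr ⟨x, ⟨hxS, hx0⟩, rfl⟩)

end Punctured

section ScaleInvariant

variable {𝕜 E : Type*} [RCLike 𝕜] [NormedAddCommGroup E] [NormedSpace 𝕜 E] {f : E → ℝ}

lemma image_punctured_eq_image_inter_sphere
    (hf : ∀ x ≠ 0, ∀ c : 𝕜, c ≠ 0 → f (c • x) = f x) (S : Submodule 𝕜 E) :
    f '' {x | x ∈ S ∧ x ≠ 0} = f '' (S ∩ Metric.sphere 0 1) := by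
  refine Subset.antisymm ?_
    (image_mono fun x ⟨hxS, hx⟩ => ⟨hxS, ne_zero_of_mem_unit_sphere ⟨x, hx⟩⟩)
  rintro _ ⟨x, ⟨hxS, hx⟩, rfl⟩
  refine ⟨(‖x‖⁻¹ : 𝕜) • x, ⟨S.smul_mem _ hxS, by simpa using norm_smul_inv_norm hx⟩, ?_⟩
  exact hf x hx _ (by simpa using hx)

lemma isCompact_image_punctured [FiniteDimensional 𝕜 E] (hcont : ContinuousOn f {x | x ≠ 0})
    (hf : ∀ x ≠ 0, ∀ c : 𝕜, c ≠ 0 → f (c • x) = f x) (S : Submodule 𝕜 E) :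
    IsCompact (f '' {x | x ∈ S ∧ x ≠ 0}) := by
  have := FiniteDimensional.proper_rclike 𝕜 E
  rw [image_punctured_eq_image_inter_sphere hf]
  exact ((isCompact_sphere 0 1).inter_left S.closed_of_finiteDimensional).image_of_continuousOn
    (hcont.mono fun x hx => ne_zero_of_mem_unit_sphere ⟨x, hx.2⟩)

end ScaleInvariant

lemma LinearIndependent.finrank_span_image_finset {K V ι : Type*} [DivisionRing K]
    [AddCommGroup V] [Module K V] {w : ι → V} (hw : LinearIndependent K w) (s : Finset ι) :
    finrank K (Submodule.span K (w '' s)) = s.card := by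
  have hs : w '' s = range (w ∘ (Subtype.val : s → ι)) := by
    rw [range_comp, Subtype.range_coe_subtype, Finset.setOfPred_mem]
  rw [hs, finrank_span_eq_card (hw.comp _ Subtype.val_injective), Fintype.card_coe]

section OrthonormalEigenvectors

variable {m ι : Type*} [Fintype m] [Fintype ι] [DecidableEq ι] {w : ι → m → ℂ}

lemma re_star_dotProduct_self_pos {x : m → ℂ} (hx : x ≠ 0) : 0 < (star x ⬝ᵥ x).re :=
  (Complex.pos_iff.mp (dotProduct_star_self_pos_iff.mpr hx)).1

lemma star_dotProduct_sum_smul (hw : ∀ i j, star (w i) ⬝ᵥ w j = if i = j then 1 else 0)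
    (c : ι → ℂ) (j : ι) : star (w j) ⬝ᵥ ∑ i, c i • w i = c j := by
  simp [dotProduct_sum, dotProduct_smul, hw]

lemma star_sum_smul_dotProduct_sum_smul
    (hw : ∀ i j, star (w i) ⬝ᵥ w j = if i = j then 1 else 0) (c d : ι → ℂ) :
    star (∑ i, c i • w i) ⬝ᵥ ∑ i, d i • w i = ∑ i, star (c i) * d i := by
  simp [star_sum, sum_dotProduct, smul_dotProduct, star_dotProduct_sum_smul hw]

lemma linearIndependent_of_star_dotProduct_eq_ite
    (hw : ∀ i j, star (w i) ⬝ᵥ w j = if i = j then 1 else 0) : LinearIndependent ℂ w :=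
  Fintype.linearIndependent_iff.mpr fun c hc j => by
    simpa [hc] using (star_dotProduct_sum_smul hw c j).symm

lemma mul_re_star_dotProduct_le_of_mem_span {A : Matrix m m ℂ} {ev : ι → ℝ}
    (hw : ∀ i j, star (w i) ⬝ᵥ w j = if i = j then 1 else 0)
    (hA : ∀ i, A *ᵥ w i = (ev i : ℂ) • w i) {s : Set ι} {μ : ℝ} (hs : ∀ i ∈ s, μ ≤ ev i)
    {x : m → ℂ} (hx : x ∈ Submodule.span ℂ (w '' s)) :
    μ * (star x ⬝ᵥ x).re ≤ (star x ⬝ᵥ A *ᵥ x).re := by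
  obtain ⟨l, hls, rfl⟩ := (Finsupp.mem_span_image_iff_linearCombination ℂ).mp hx
  have hAl : A *ᵥ ∑ i, l i • w i = ∑ i, ((ev i : ℂ) * l i) • w i := by
    simp only [mulVec_sum, mulVec_smul, hA, smul_smul, mul_comm]
  have hnorm (c : ℂ) : (star c * c).re = ‖c‖ ^ 2 := by
    rw [Complex.star_def, Complex.conj_mul']
    norm_cast
  have hform (c : ℂ) (e : ℝ) : (star c * (e * c)).re = e * ‖c‖ ^ 2 := by
    rw [mul_left_comm, Complex.re_ofReal_mul, hnorm]
  simp only [Finsupp.linearCombination_apply, Finsupp.sum_fintype, zero_smul, implies_true]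
  rw [hAl, star_sum_smul_dotProduct_sum_smul hw, star_sum_smul_dotProduct_sum_smul hw]
  simp only [Complex.re_sum, Finset.mul_sum, hnorm, hform]
  refine Finset.sum_le_sum fun i _ => ?_
  by_cases hi : i ∈ s
  · exact mul_le_mul_of_nonneg_right (hs i hi) (sq_nonneg ‖l i‖)
  · simp [(Finsupp.mem_supported' ℂ l).mp hls i hi]

end OrthonormalEigenvectors

namespace Matrix.IsHermitian

variable {n : ℕ} {A : Matrix (Fin n) (Fin n) ℂ}

/-- Unlike `Matrix.IsHermitian.eigenvalues`, these are listed in decreasing order. -/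
noncomputable def sortedEigenvalues (hA : A.IsHermitian) : Fin n → ℝ :=
  (isSymmetric_toEuclideanLin_iff.mpr hA).eigenvalues finrank_euclideanSpace_fin

noncomputable def sortedEigenvectors (hA : A.IsHermitian) (i : Fin n) : Fin n → ℂ :=
  ((isSymmetric_toEuclideanLin_iff.mpr hA).eigenvectorBasis finrank_euclideanSpace_fin i).ofLp

variable (hA : A.IsHermitian)

lemma sortedEigenvalues_antitone : Antitone hA.sortedEigenvalues :=
  LinearMap.IsSymmetric.eigenvalues_antitone ..

lemma star_sortedEigenvectors_dotProduct (i j : Fin n) :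
    star (hA.sortedEigenvectors i) ⬝ᵥ hA.sortedEigenvectors j = if i = j then 1 else 0 := by
  rw [dotProduct_comm, ← EuclideanSpace.inner_eq_star_dotProduct]
  exact orthonormal_iff_ite.mp (OrthonormalBasis.orthonormal _) i j

lemma mulVec_sortedEigenvectors (i : Fin n) :
    A *ᵥ hA.sortedEigenvectors i = (hA.sortedEigenvalues i : ℂ) • hA.sortedEigenvectors i :=
  congrArg WithLp.ofLp ((isSymmetric_toEuclideanLin_iff.mpr hA).apply_eigenvectorBasis
    finrank_euclideanSpace_fin i)

lemma sortedEigenvectors_ne_zero (i : Fin n) : hA.sortedEigenvectors i ≠ 0 := fun h => by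
  simpa [h] using hA.star_sortedEigenvectors_dotProduct i i

lemma charpoly_eq_prod_sortedEigenvalues :
    A.charpoly = ∏ i, (Polynomial.X - Polynomial.C (hA.sortedEigenvalues i : ℂ)) := by
  rw [← Matrix.charpoly_toLin A (EuclideanSpace.basisFun (Fin n) ℂ).toBasis]
  exact (isSymmetric_toEuclideanLin_iff.mpr hA).charpoly_eq finrank_euclideanSpace_fin

lemma zeroIsKthLargestEigenvalue_of_sortedEigenvalues_eq_zero {k : Fin n}
    (hk : hA.sortedEigenvalues k = 0) : ZeroIsKthLargestEigenvalue A k :=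
  ⟨_, hA.sortedEigenvalues_antitone, hA.charpoly_eq_prod_sortedEigenvalues, hk⟩

lemma finrank_span_sortedEigenvectors (s : Finset (Fin n)) :
    finrank ℂ (Submodule.span ℂ (hA.sortedEigenvectors '' s)) = s.card :=
  (linearIndependent_of_star_dotProduct_eq_ite
    hA.star_sortedEigenvectors_dotProduct).finrank_span_image_finset s

lemma finrank_span_sortedEigenvectors_Iic (k : Fin n) :
    finrank ℂ (Submodule.span ℂ (hA.sortedEigenvectors '' Iic k)) = k + 1 := by
  rw [← Finset.coe_Iic, finrank_span_sortedEigenvectors, Fin.card_Iic]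

lemma finrank_span_sortedEigenvectors_Ici (k : Fin n) :
    finrank ℂ (Submodule.span ℂ (hA.sortedEigenvectors '' Ici k)) = n - k := by
  rw [← Finset.coe_Ici, finrank_span_sortedEigenvectors, Fin.card_Ici]

lemma sortedEigenvalues_mul_le_of_mem_span_Iic {k : Fin n} {x : Fin n → ℂ}
    (hx : x ∈ Submodule.span ℂ (hA.sortedEigenvectors '' Iic k)) :
    hA.sortedEigenvalues k * (star x ⬝ᵥ x).re ≤ (star x ⬝ᵥ A *ᵥ x).re :=
  mul_re_star_dotProduct_le_of_mem_span hA.star_sortedEigenvectors_dotProduct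
    hA.mulVec_sortedEigenvectors (fun _ hi => hA.sortedEigenvalues_antitone hi) hx

lemma le_sortedEigenvalues_mul_of_mem_span_Ici {k : Fin n} {x : Fin n → ℂ}
    (hx : x ∈ Submodule.span ℂ (hA.sortedEigenvectors '' Ici k)) :
    (star x ⬝ᵥ A *ᵥ x).re ≤ hA.sortedEigenvalues k * (star x ⬝ᵥ x).re := by
  have := mul_re_star_dotProduct_le_of_mem_span (A := -A) (ev := -hA.sortedEigenvalues)
    hA.star_sortedEigenvectors_dotProduct (fun i => by simp [neg_mulVec, mulVec_sortedEigenvectors])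
    (fun _ hi => neg_le_neg (hA.sortedEigenvalues_antitone hi)) hx
  simp only [neg_mulVec, dotProduct_neg, Complex.neg_re] at this
  linarith

end Matrix.IsHermitian

section MaxMinValues

variable {E : Type*} [AddCommGroup E] [Module ℂ E]

def maxMinValues (ρ : E → ℝ) (d : ℕ) : Set ℝ :=
  {r | ∃ S : Submodule ℂ E, finrank ℂ S = d ∧ IsLeast (ρ '' {x | x ∈ S ∧ x ≠ 0}) r}

def minMaxValues (ρ : E → ℝ) (d : ℕ) : Set ℝ :=
  {r | ∃ S : Submodule ℂ E, finrank ℂ S = d ∧ IsGreatest (ρ '' {x | x ∈ S ∧ x ≠ 0}) r}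

end MaxMinValues

section RayleighFunctional

variable {n : ℕ} {T : ℝ → Matrix (Fin n) (Fin n) ℂ} {ρ : (Fin n → ℂ) → ℝ} {a b : ℝ}

structure IsRayleighFunctional (T : ℝ → Matrix (Fin n) (Fin n) ℂ) (ρ : (Fin n → ℂ) → ℝ)
    (a b : ℝ) : Prop where
  continuousOn : ContinuousOn ρ {x | x ≠ 0}
  mem_Ioo : ∀ x : Fin n → ℂ, x ≠ 0 → ρ x ∈ Ioo a b
  form_eq_zero : ∀ x : Fin n → ℂ, x ≠ 0 → star x ⬝ᵥ T (ρ x) *ᵥ x = 0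
  eq_of_form_eq_zero : ∀ x : Fin n → ℂ, x ≠ 0 → ∀ μ ∈ Ioo a b,
    star x ⬝ᵥ T μ *ᵥ x = 0 → μ = ρ x

def IsNegativeType (T : ℝ → Matrix (Fin n) (Fin n) ℂ) (ρ : (Fin n → ℂ) → ℝ) (a b : ℝ) : Prop :=
  ∀ x : Fin n → ℂ, x ≠ 0 → ∀ μ ∈ Ioo a b, μ ≠ ρ x → (μ - ρ x) * (star x ⬝ᵥ T μ *ᵥ x).re < 0

namespace IsRayleighFunctional

lemma apply_smul (hρ : IsRayleighFunctional T ρ a b) {x : Fin n → ℂ} (hx : x ≠ 0) {c : ℂ}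
    (hc : c ≠ 0) : ρ (c • x) = ρ x := by
  refine (hρ.eq_of_form_eq_zero _ (smul_ne_zero hc hx) _ (hρ.mem_Ioo x hx) ?_).symm
  simp [mulVec_smul, star_smul, hρ.form_eq_zero x hx]

lemma exists_isLeast (hρ : IsRayleighFunctional T ρ a b) {S : Submodule ℂ (Fin n → ℂ)}
    (hS : 0 < finrank ℂ S) : ∃ r, IsLeast (ρ '' {x | x ∈ S ∧ x ≠ 0}) r :=
  (isCompact_image_punctured hρ.continuousOn (fun _ hx _ hc => hρ.apply_smul hx hc)
    S).exists_isLeast (nonempty_image_punctured hS)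

lemma exists_isGreatest (hρ : IsRayleighFunctional T ρ a b) {S : Submodule ℂ (Fin n → ℂ)}
    (hS : 0 < finrank ℂ S) : ∃ r, IsGreatest (ρ '' {x | x ∈ S ∧ x ≠ 0}) r :=
  (isCompact_image_punctured hρ.continuousOn (fun _ hx _ hc => hρ.apply_smul hx hc)
    S).exists_isGreatest (nonempty_image_punctured hS)

lemma exists_isLUB_maxMinValues (hρ : IsRayleighFunctional T ρ a b) (k : Fin n) :
    ∃ μ ∈ Ioo a b, IsLUB (maxMinValues ρ (k + 1)) μ := by
  obtain ⟨f, hf⟩ := exists_linearIndependent_of_le_finrank (R := ℂ) (M := Fin n → ℂ)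
    (n := k + 1) (by simp)
  have hS₀ : finrank ℂ (Submodule.span ℂ (range f)) = k + 1 := by simp [finrank_span_eq_card hf]
  obtain ⟨r₀, hr₀⟩ := hρ.exists_isLeast (by rw [hS₀]; exact k.succ_pos)
  obtain ⟨R, hR⟩ := hρ.exists_isGreatest (S := ⊤) (by simpa using k.pos)
  have hbdd : R ∈ upperBounds (maxMinValues ρ (k + 1)) := by
    rintro r ⟨S, -, hr⟩
    obtain ⟨x, ⟨-, hx⟩, rfl⟩ := hr.1
    exact hR.2 ⟨x, ⟨trivial, hx⟩, rfl⟩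
  obtain ⟨μ, hμ⟩ := Real.exists_isLUB (s := maxMinValues ρ (k + 1)) ⟨r₀, _, hS₀, hr₀⟩
    ⟨R, hbdd⟩
  obtain ⟨x₀, ⟨-, hx₀⟩, rfl⟩ := hr₀.1
  obtain ⟨y, ⟨-, hy⟩, rfl⟩ := hR.1
  exact ⟨μ, ⟨(hρ.mem_Ioo x₀ hx₀).1.trans_le (hμ.1 ⟨_, hS₀, hr₀⟩),
    (hμ.2 hbdd).trans_lt (hρ.mem_Ioo y hy).2⟩, hμ⟩

end IsRayleighFunctional

namespace IsNegativeType

variable {μ : ℝ} {x : Fin n → ℂ}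

lemma form_pos_iff (hneg : IsNegativeType T ρ a b) (hρ : IsRayleighFunctional T ρ a b)
    (hx : x ≠ 0) (hμ : μ ∈ Ioo a b) : 0 < (star x ⬝ᵥ T μ *ᵥ x).re ↔ μ < ρ x := by
  rcases lt_trichotomy μ (ρ x) with h | rfl | h
  · exact iff_of_true (pos_of_mul_neg_right (hneg x hx μ hμ h.ne) (sub_neg.mpr h).le) h
  · simp [hρ.form_eq_zero x hx]
  · exact iff_of_false (neg_of_mul_neg_right (hneg x hx μ hμ h.ne') (sub_pos.mpr h).le).not_gt
      h.not_gt

lemma form_neg_iff (hneg : IsNegativeType T ρ a b) (hρ : IsRayleighFunctional T ρ a b)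
    (hx : x ≠ 0) (hμ : μ ∈ Ioo a b) : (star x ⬝ᵥ T μ *ᵥ x).re < 0 ↔ ρ x < μ := by
  rcases lt_trichotomy μ (ρ x) with h | rfl | h
  · exact iff_of_false (pos_of_mul_neg_right (hneg x hx μ hμ h.ne) (sub_neg.mpr h).le).not_gt
      h.not_gt
  · simp [hρ.form_eq_zero x hx]
  · exact iff_of_true (neg_of_mul_neg_right (hneg x hx μ hμ h.ne') (sub_pos.mpr h).le) h

lemma form_nonneg_iff (hneg : IsNegativeType T ρ a b) (hρ : IsRayleighFunctional T ρ a b)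
    (hx : x ≠ 0) (hμ : μ ∈ Ioo a b) : 0 ≤ (star x ⬝ᵥ T μ *ᵥ x).re ↔ μ ≤ ρ x := by
  rw [← not_lt, ← not_lt, hneg.form_neg_iff hρ hx hμ]

lemma form_nonpos_iff (hneg : IsNegativeType T ρ a b) (hρ : IsRayleighFunctional T ρ a b)
    (hx : x ≠ 0) (hμ : μ ∈ Ioo a b) : (star x ⬝ᵥ T μ *ᵥ x).re ≤ 0 ↔ ρ x ≤ μ := by
  rw [← not_lt, ← not_lt, hneg.form_pos_iff hρ hx hμ]

variable {k : Fin n}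

lemma lt_rayleigh_of_mem_span_Iic (hneg : IsNegativeType T ρ a b)
    (hρ : IsRayleighFunctional T ρ a b) (hμ : μ ∈ Ioo a b) (hA : (T μ).IsHermitian)
    (hk : 0 < hA.sortedEigenvalues k)
    (hx : x ∈ Submodule.span ℂ (hA.sortedEigenvectors '' Iic k)) (hx0 : x ≠ 0) : μ < ρ x :=
  (hneg.form_pos_iff hρ hx0 hμ).mp <| (mul_pos hk (re_star_dotProduct_self_pos hx0)).trans_le
    (hA.sortedEigenvalues_mul_le_of_mem_span_Iic hx)

lemma le_rayleigh_of_mem_span_Iic (hneg : IsNegativeType T ρ a b)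
    (hρ : IsRayleighFunctional T ρ a b) (hμ : μ ∈ Ioo a b) (hA : (T μ).IsHermitian)
    (hk : 0 ≤ hA.sortedEigenvalues k)
    (hx : x ∈ Submodule.span ℂ (hA.sortedEigenvectors '' Iic k)) (hx0 : x ≠ 0) : μ ≤ ρ x :=
  (hneg.form_nonneg_iff hρ hx0 hμ).mp <| (mul_nonneg hk (re_star_dotProduct_self_pos hx0).le).trans
    (hA.sortedEigenvalues_mul_le_of_mem_span_Iic hx)

lemma rayleigh_lt_of_mem_span_Ici (hneg : IsNegativeType T ρ a b)
    (hρ : IsRayleighFunctional T ρ a b) (hμ : μ ∈ Ioo a b) (hA : (T μ).IsHermitian)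
    (hk : hA.sortedEigenvalues k < 0)
    (hx : x ∈ Submodule.span ℂ (hA.sortedEigenvectors '' Ici k)) (hx0 : x ≠ 0) : ρ x < μ :=
  (hneg.form_neg_iff hρ hx0 hμ).mp <| (hA.le_sortedEigenvalues_mul_of_mem_span_Ici hx).trans_lt
    (mul_neg_of_neg_of_pos hk (re_star_dotProduct_self_pos hx0))

lemma rayleigh_le_of_mem_span_Ici (hneg : IsNegativeType T ρ a b)
    (hρ : IsRayleighFunctional T ρ a b) (hμ : μ ∈ Ioo a b) (hA : (T μ).IsHermitian)
    (hk : hA.sortedEigenvalues k ≤ 0)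
    (hx : x ∈ Submodule.span ℂ (hA.sortedEigenvectors '' Ici k)) (hx0 : x ≠ 0) : ρ x ≤ μ :=
  (hneg.form_nonpos_iff hρ hx0 hμ).mp <| (hA.le_sortedEigenvalues_mul_of_mem_span_Ici hx).trans
    (mul_nonpos_of_nonpos_of_nonneg hk (re_star_dotProduct_self_pos hx0).le)

lemma rayleigh_sortedEigenvectors (hneg : IsNegativeType T ρ a b)
    (hρ : IsRayleighFunctional T ρ a b) (hμ : μ ∈ Ioo a b) (hA : (T μ).IsHermitian)
    (hk : hA.sortedEigenvalues k = 0) : ρ (hA.sortedEigenvectors k) = μ :=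
  le_antisymm
    (hneg.rayleigh_le_of_mem_span_Ici hρ hμ hA hk.le
      (Submodule.subset_span (mem_image_of_mem _ self_mem_Ici)) (hA.sortedEigenvectors_ne_zero k))
    (hneg.le_rayleigh_of_mem_span_Iic hρ hμ hA hk.ge
      (Submodule.subset_span (mem_image_of_mem _ self_mem_Iic)) (hA.sortedEigenvectors_ne_zero k))

lemma sortedEigenvalues_nonpos_of_mem_upperBounds (hneg : IsNegativeType T ρ a b)
    (hρ : IsRayleighFunctional T ρ a b) (hμ : μ ∈ Ioo a b) (hA : (T μ).IsHermitian)
    (h : μ ∈ upperBounds (maxMinValues ρ (k + 1))) : hA.sortedEigenvalues k ≤ 0 := by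
  by_contra! hk
  have hS := hA.finrank_span_sortedEigenvectors_Iic k
  obtain ⟨r, hr⟩ := hρ.exists_isLeast (by rw [hS]; exact k.succ_pos)
  obtain ⟨x, ⟨hx, hx0⟩, rfl⟩ := hr.1
  exact (hneg.lt_rayleigh_of_mem_span_Iic hρ hμ hA hk hx hx0).not_ge (h ⟨_, hS, hr⟩)

lemma sortedEigenvalues_nonneg_of_isLUB (hneg : IsNegativeType T ρ a b)
    (hρ : IsRayleighFunctional T ρ a b) (hμ : μ ∈ Ioo a b) (hA : (T μ).IsHermitian)
    (h : IsLUB (maxMinValues ρ (k + 1)) μ) : 0 ≤ hA.sortedEigenvalues k := by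
  by_contra! hk
  have hV := hA.finrank_span_sortedEigenvectors_Ici k
  obtain ⟨R, hR⟩ := hρ.exists_isGreatest (by rw [hV]; omega)
  obtain ⟨x, ⟨hx, hx0⟩, rfl⟩ := hR.1
  obtain ⟨r, ⟨S, hS, hr⟩, hxr⟩ :=
    (lt_isLUB_iff h).mp (hneg.rayleigh_lt_of_mem_span_Ici hρ hμ hA hk hx hx0)
  refine hxr.not_ge (le_of_mem_lowerBounds_of_finrank_lt ?_ hr.2 fun y hy hy0 =>
    hR.2 ⟨y, ⟨hy, hy0⟩, rfl⟩)
  rw [finrank_fin_fun, hS, hV]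
  omega

lemma isGreatest_maxMinValues (hneg : IsNegativeType T ρ a b)
    (hρ : IsRayleighFunctional T ρ a b) (hμ : μ ∈ Ioo a b) (hA : (T μ).IsHermitian)
    (hk : hA.sortedEigenvalues k = 0) : IsGreatest (maxMinValues ρ (k + 1)) μ := by
  refine ⟨⟨_, hA.finrank_span_sortedEigenvectors_Iic k, ⟨hA.sortedEigenvectors k,
    ⟨Submodule.subset_span (mem_image_of_mem _ self_mem_Iic), hA.sortedEigenvectors_ne_zero k⟩,
    hneg.rayleigh_sortedEigenvectors hρ hμ hA hk⟩, ?_⟩, ?_⟩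
  · rintro _ ⟨x, ⟨hx, hx0⟩, rfl⟩
    exact hneg.le_rayleigh_of_mem_span_Iic hρ hμ hA hk.ge hx hx0
  · rintro r ⟨S, hS, hr⟩
    refine le_of_mem_lowerBounds_of_finrank_lt ?_ hr.2 fun x hx hx0 =>
      hneg.rayleigh_le_of_mem_span_Ici hρ hμ hA hk.le hx hx0
    rw [finrank_fin_fun, hS, hA.finrank_span_sortedEigenvectors_Ici]
    omega

lemma isLeast_minMaxValues (hneg : IsNegativeType T ρ a b)
    (hρ : IsRayleighFunctional T ρ a b) (hμ : μ ∈ Ioo a b) (hA : (T μ).IsHermitian)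
    (hk : hA.sortedEigenvalues k = 0) : IsLeast (minMaxValues ρ (n - k)) μ := by
  refine ⟨⟨_, hA.finrank_span_sortedEigenvectors_Ici k, ⟨hA.sortedEigenvectors k,
    ⟨Submodule.subset_span (mem_image_of_mem _ self_mem_Ici), hA.sortedEigenvectors_ne_zero k⟩,
    hneg.rayleigh_sortedEigenvectors hρ hμ hA hk⟩, ?_⟩, ?_⟩
  · rintro _ ⟨x, ⟨hx, hx0⟩, rfl⟩
    exact hneg.rayleigh_le_of_mem_span_Ici hρ hμ hA hk.le hx hx0
  · rintro r ⟨S, hS, hr⟩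
    refine le_of_mem_upperBounds_of_finrank_lt ?_ hr.2 fun x hx hx0 =>
      hneg.le_rayleigh_of_mem_span_Iic hρ hμ hA hk.ge hx hx0
    rw [finrank_fin_fun, hS, hA.finrank_span_sortedEigenvectors_Iic]
    omega

end IsNegativeType

end RayleighFunctional

/-- `k : Fin n` is zero-based: the max-min runs over subspaces of dimension `k+1`, the min-max over
subspaces of dimension `n-k`. -/
theorem nonlinear_variational_principle_negative_type_general
    (n : ℕ) (a b : ℝ)
    (T : ℝ → Matrix (Fin n) (Fin n) ℂ)
    (hTherm : ∀ μ ∈ Set.Icc a b, (T μ).IsHermitian)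
    (ρ : (Fin n → ℂ) → ℝ)
    (hρcont : ContinuousOn ρ {x : Fin n → ℂ | x ≠ 0})
    (hρmem : ∀ x : Fin n → ℂ, x ≠ 0 → ρ x ∈ Set.Ioo a b)
    (hρroot : ∀ x : Fin n → ℂ, x ≠ 0 → star x ⬝ᵥ (T (ρ x)) *ᵥ x = 0)
    (hρuniq : ∀ x : Fin n → ℂ, x ≠ 0 → ∀ μ ∈ Set.Ioo a b,
      star x ⬝ᵥ (T μ) *ᵥ x = 0 → μ = ρ x)
    (hneg : ∀ x : Fin n → ℂ, x ≠ 0 → ∀ μ ∈ Set.Ioo a b, μ ≠ ρ x →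
      (μ - ρ x) * (star x ⬝ᵥ (T μ) *ᵥ x).re < 0) :
    ∀ k : Fin n, ∃ lam ∈ Set.Ioo a b,
      ZeroIsKthLargestEigenvalue (T lam) k ∧
      IsGreatest {r : ℝ | ∃ S : Submodule ℂ (Fin n → ℂ), Module.finrank ℂ S = (k : ℕ) + 1 ∧
        IsLeast (ρ '' {x : Fin n → ℂ | x ∈ S ∧ x ≠ 0}) r} lam ∧
      IsLeast {r : ℝ | ∃ S : Submodule ℂ (Fin n → ℂ), Module.finrank ℂ S = n - (k : ℕ) ∧
        IsGreatest (ρ '' {x : Fin n → ℂ | x ∈ S ∧ x ≠ 0}) r} lam := by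
  intro k
  have hρ : IsRayleighFunctional T ρ a b := ⟨hρcont, hρmem, hρroot, hρuniq⟩
  have hJ : IsNegativeType T ρ a b := hneg
  obtain ⟨lam, hlam, hlub⟩ := hρ.exists_isLUB_maxMinValues k
  have hA : (T lam).IsHermitian := hTherm lam (Ioo_subset_Icc_self hlam)
  have hk : hA.sortedEigenvalues k = 0 :=
    le_antisymm (hJ.sortedEigenvalues_nonpos_of_mem_upperBounds hρ hlam hA hlub.1)
      (hJ.sortedEigenvalues_nonneg_of_isLUB hρ hlam hA hlub)
  exact ⟨lam, hlam, hA.zeroIsKthLargestEigenvalue_of_sortedEigenvalues_eq_zero hk,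
    hJ.isGreatest_maxMinValues hρ hlam hA hk, hJ.isLeast_minMaxValues hρ hlam hA hk⟩

/-- nonlinear variational principle (max-min form) on an interval of
negative type: for each `k` there is a `k`-th eigenvalue `λₖ ∈ (a,b)` of `T(·)`
satisfying the max-min and min-max characterizations of the Rayleigh functional,
with all extrema attained.  (`k : Fin n` is zero-based: dimension `k+1` subspaces
for the max-min, dimension `n-k` for the min-max.) -/
theorem nonlinear_variational_principle_negative_type
    (n : ℕ) (hn : 1 ≤ n) (a b : ℝ) (hab : a < b)
    (T T' : ℝ → Matrix (Fin n) (Fin n) ℂ)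
    (hTcont : ContinuousOn T (Set.Icc a b))
    (hTherm : ∀ μ ∈ Set.Icc a b, (T μ).IsHermitian)
    (hT'deriv : ∀ μ ∈ Set.Ioo a b, ∀ i j : Fin n,
      HasDerivAt (fun t : ℝ => T t i j) (T' μ i j) μ)
    (hT'cont : ContinuousOn T' (Set.Ioo a b))
    (ρ : (Fin n → ℂ) → ℝ)
    (hρcont : ContinuousOn ρ {x : Fin n → ℂ | x ≠ 0})
    (hρmem : ∀ x : Fin n → ℂ, x ≠ 0 → ρ x ∈ Set.Ioo a b)
    (hρroot : ∀ x : Fin n → ℂ, x ≠ 0 → star x ⬝ᵥ (T (ρ x)) *ᵥ x = 0)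
    (hρuniq : ∀ x : Fin n → ℂ, x ≠ 0 → ∀ μ ∈ Set.Ioo a b,
      star x ⬝ᵥ (T μ) *ᵥ x = 0 → μ = ρ x)
    (hneg : ∀ x : Fin n → ℂ, x ≠ 0 → ∀ μ ∈ Set.Ioo a b, μ ≠ ρ x →
      (μ - ρ x) * (star x ⬝ᵥ (T μ) *ᵥ x).re < 0) :
    ∀ k : Fin n, ∃ lam ∈ Set.Ioo a b,
      ZeroIsKthLargestEigenvalue (T lam) k ∧
      IsGreatest {r : ℝ | ∃ S : Submodule ℂ (Fin n → ℂ), Module.finrank ℂ S = (k : ℕ) + 1 ∧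
        IsLeast (ρ '' {x : Fin n → ℂ | x ∈ S ∧ x ≠ 0}) r} lam ∧
      IsLeast {r : ℝ | ∃ S : Submodule ℂ (Fin n → ℂ), Module.finrank ℂ S = n - (k : ℕ) ∧
        IsGreatest (ρ '' {x : Fin n → ℂ | x ∈ S ∧ x ≠ 0}) r} lam :=
  nonlinear_variational_principle_negative_type_general n a b T hTherm ρ hρcont hρmem hρroot hρuniq
    hneg
end

section
/- Assume the interval J = (a,b) is of positive type and T is continuously differentiable on (a,b); for k ∈ {1,…,n} let λ_k denote the minimum over all ℂ-subspaces S ⊆ ℂ^n with dim S = k of the maximum of ρ(x) over nonzero x ∈ S. Then T(·) has exactly n eigenvalues in (a,b) counted with multiplicity: every eigenvalue λ ∈ (a,b) of T(·) equals λ_k for some k ∈ {1,…,n}, and for each eigenvalue λ ∈ (a,b) the number of indices k ∈ {1,…,n} with λ_k = λ equals the dimension of the kernel of T(λ). -/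
open Matrix Set Module

/-!
Fix an eigenvalue `μ₀` and put `A = T μ₀`. Positive type says that for `x ≠ 0` the sign of
`x* A x` is the sign of `μ₀ - ρ x`. Hence `lam k ≤ μ₀` iff some `(k+1)`-dimensional subspace
carries `x* A x ≥ 0`, and `lam k < μ₀` iff some carries `x* A x > 0` (the maxima defining
`lam k` are attained, since `ρ` is continuous and constant on lines). Diagonalizing `A`, these
hold iff `k + 1` is at most the number of nonnegative, resp. positive, eigenvalues of `A`
(Sylvester's law of inertia). So `lam k = μ₀` for exactly as many `k` as `A` has zero
eigenvalues, i.e. `dim ker A` of them.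
-/

section MinMax

variable {K E : Type*} [Semiring K] [AddCommMonoid E] [Module K E] {ρ : E → ℝ} {d : ℕ}
  {l c : ℝ}

theorem le_iff_exists_forall_le_of_isLeast
    (hl : IsLeast {r | ∃ S : Submodule K E, finrank K S = d ∧
      IsGreatest (ρ '' {x | x ∈ S ∧ x ≠ 0}) r} l)
    (hmax : ∀ S : Submodule K E, finrank K S = d → ∃ r, IsGreatest (ρ '' {x | x ∈ S ∧ x ≠ 0}) r) :
    l ≤ c ↔ ∃ S : Submodule K E, finrank K S = d ∧ ∀ x ∈ S, x ≠ 0 → ρ x ≤ c := by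
  constructor
  · intro hlc
    obtain ⟨S, hS, hG⟩ := hl.1
    exact ⟨S, hS, fun x hx hx0 => (hG.2 ⟨x, ⟨hx, hx0⟩, rfl⟩).trans hlc⟩
  · rintro ⟨S, hS, hρ⟩
    obtain ⟨r, hr⟩ := hmax S hS
    obtain ⟨x, ⟨hx, hx0⟩, rfl⟩ := hr.1
    exact (hl.2 ⟨S, hS, hr⟩).trans (hρ x hx hx0)

theorem lt_iff_exists_forall_lt_of_isLeast
    (hl : IsLeast {r | ∃ S : Submodule K E, finrank K S = d ∧
      IsGreatest (ρ '' {x | x ∈ S ∧ x ≠ 0}) r} l)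
    (hmax : ∀ S : Submodule K E, finrank K S = d → ∃ r, IsGreatest (ρ '' {x | x ∈ S ∧ x ≠ 0}) r) :
    l < c ↔ ∃ S : Submodule K E, finrank K S = d ∧ ∀ x ∈ S, x ≠ 0 → ρ x < c := by
  constructor
  · intro hlc
    obtain ⟨S, hS, hG⟩ := hl.1
    exact ⟨S, hS, fun x hx hx0 => (hG.2 ⟨x, ⟨hx, hx0⟩, rfl⟩).trans_lt hlc⟩
  · rintro ⟨S, hS, hρ⟩
    obtain ⟨r, hr⟩ := hmax S hS
    obtain ⟨x, ⟨hx, hx0⟩, rfl⟩ := hr.1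
    exact (hl.2 ⟨S, hS, hr⟩).trans_lt (hρ x hx hx0)

end MinMax

theorem exists_isGreatest_image_of_smul_invariant {𝕜 E : Type*} [RCLike 𝕜]
    [NormedAddCommGroup E] [NormedSpace 𝕜 E] [FiniteDimensional 𝕜 E] {ρ : E → ℝ}
    (hρ : ContinuousOn ρ {x | x ≠ 0}) (hsmul : ∀ x ≠ 0, ∀ c : 𝕜, c ≠ 0 → ρ (c • x) = ρ x)
    {S : Submodule 𝕜 E} (hS : S ≠ ⊥) :
    ∃ r, IsGreatest (ρ '' {x | x ∈ S ∧ x ≠ 0}) r := by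
  have hnormalize : ∀ x ∈ S, x ≠ 0 → ∃ y ∈ (S : Set E) ∩ Metric.sphere 0 1, ρ y = ρ x := by
    intro x hx hx0
    refine ⟨(‖x‖⁻¹ : 𝕜) • x, ⟨S.smul_mem _ hx, ?_⟩, hsmul x hx0 _ (by simp [hx0])⟩
    simp [norm_smul, hx0]
  have himage : ρ '' {x | x ∈ S ∧ x ≠ 0} = ρ '' ((S : Set E) ∩ Metric.sphere 0 1) := by
    ext r
    constructor
    · rintro ⟨x, ⟨hx, hx0⟩, rfl⟩
      exact hnormalize x hx hx0
    · rintro ⟨x, ⟨hx, hx1⟩, rfl⟩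
      exact ⟨x, ⟨hx, ne_zero_of_mem_unit_sphere ⟨x, hx1⟩⟩, rfl⟩
  have := FiniteDimensional.proper 𝕜 E
  obtain ⟨x, hx, hx0⟩ := Submodule.exists_mem_ne_zero_of_ne_bot hS
  obtain ⟨y, hy, -⟩ := hnormalize x hx hx0
  have hK : IsCompact ((S : Set E) ∩ Metric.sphere 0 1) :=
    (isCompact_sphere 0 1).inter_left S.closed_of_finiteDimensional
  rw [himage]
  exact (hK.image_of_continuousOn (hρ.mono fun z hz => ne_zero_of_mem_unit_sphere ⟨z, hz.2⟩))
    |>.exists_isGreatest ⟨ρ y, y, hy, rfl⟩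

section Inertia

variable {K E ι : Type*} [DivisionRing K] [AddCommGroup E] [Module K E] [Fintype ι]

theorem finrank_comap_spanSubset (e : E ≃ₗ[K] (ι → K)) (s : Set ι) :
    finrank K ((Pi.spanSubset K s).comap e.toLinearMap) = s.ncard := by
  rw [Submodule.comap_equiv_eq_map_symm, LinearEquiv.finrank_map_eq, Pi.dim_spanSubset]

theorem exists_finrank_eq_forall_iff_le_ncard (e : E ≃ₗ[K] (ι → K)) {p : E → Prop} {s : Set ι}
    (hs : ∀ x, (∀ i ∉ s, e x i = 0) → x ≠ 0 → p x)
    (hsc : ∀ x, (∀ i ∈ s, e x i = 0) → x ≠ 0 → ¬ p x) (m : ℕ) :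
    (∃ S : Submodule K E, finrank K S = m ∧ ∀ x ∈ S, x ≠ 0 → p x) ↔ m ≤ s.ncard := by
  have := e.symm.finiteDimensional
  constructor
  · rintro ⟨S, rfl, hS⟩
    set W := (Pi.spanSubset K sᶜ).comap e.toLinearMap
    have hdisj : Disjoint S W := by
      refine Submodule.disjoint_def.mpr fun x hxS hxW => by_contra fun hx => ?_
      refine hsc x (fun i hi => ?_) hx (hS x hxS hx)
      exact Pi.mem_spanSubset_iff.mp hxW i (not_not_intro hi)
    have := Submodule.finrank_add_finrank_le_of_disjoint hdisj
    rw [finrank_comap_spanSubset, e.finrank_eq, finrank_fintype_fun_eq_card,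
      ← Nat.card_eq_fintype_card, ← Set.ncard_add_ncard_compl s] at this
    omega
  · intro hm
    obtain ⟨t, hts, rfl⟩ := Set.exists_subset_card_eq hm
    refine ⟨(Pi.spanSubset K t).comap e.toLinearMap, finrank_comap_spanSubset e t, fun x hx => ?_⟩
    exact hs x fun i hi => Pi.mem_spanSubset_iff.mp hx i fun hit => hi (hts hit)

end Inertia

section WeightedSumSquares

variable {𝕜 ι : Type*} [RCLike 𝕜] {w : ι → ℝ} {s : Set ι} {y : ι → 𝕜}

theorem mul_norm_sq_nonneg_of_support (hw : ∀ i ∈ s, 0 ≤ w i) (hy : ∀ i ∉ s, y i = 0) (i : ι) :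
    0 ≤ w i * ‖y i‖ ^ 2 := by
  by_cases hi : i ∈ s
  · exact mul_nonneg (hw i hi) (sq_nonneg _)
  · simp [hy i hi]

variable [Fintype ι]

theorem sum_mul_norm_sq_nonneg (hw : ∀ i ∈ s, 0 ≤ w i) (hy : ∀ i ∉ s, y i = 0) :
    0 ≤ ∑ i, w i * ‖y i‖ ^ 2 :=
  Finset.sum_nonneg fun i _ => mul_norm_sq_nonneg_of_support hw hy i

theorem sum_mul_norm_sq_pos (hw : ∀ i ∈ s, 0 < w i) (hy : ∀ i ∉ s, y i = 0) (hy0 : y ≠ 0) :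
    0 < ∑ i, w i * ‖y i‖ ^ 2 := by
  obtain ⟨j, hj⟩ := Function.ne_iff.mp hy0
  have hjs : j ∈ s := by_contra fun h => hj (hy j h)
  refine Finset.sum_pos' (fun i _ => mul_norm_sq_nonneg_of_support (fun i hi => (hw i hi).le) hy i)
    ⟨j, Finset.mem_univ j, mul_pos (hw j hjs) (pow_pos (norm_pos_iff.mpr hj) 2)⟩

theorem ncard_nonneg_eq_ncard_pos_add_ncard_zero (w : ι → ℝ) :
    {i | 0 ≤ w i}.ncard = {i | 0 < w i}.ncard + {i | w i = 0}.ncard := by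
  rw [← Set.ncard_union_eq (Set.disjoint_left.mpr fun i hi h0 => hi.ne' h0)]
  congr 1
  ext i
  simp [le_iff_lt_or_eq, eq_comm]

end WeightedSumSquares

namespace Matrix.IsHermitian

variable {𝕜 ι : Type*} [RCLike 𝕜] [Fintype ι] [DecidableEq ι] {A : Matrix ι ι 𝕜}

theorem re_star_dotProduct_mulVec (hA : A.IsHermitian) (x : ι → 𝕜) :
    RCLike.re (star x ⬝ᵥ A *ᵥ x) =
      ∑ i, hA.eigenvalues i * ‖(star (hA.eigenvectorUnitary : Matrix ι ι 𝕜) *ᵥ x) i‖ ^ 2 := by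
  set U : Matrix ι ι 𝕜 := (hA.eigenvectorUnitary : Matrix ι ι 𝕜)
  have hA' : A = U * diagonal (RCLike.ofReal ∘ hA.eigenvalues) * star U := hA.spectral_theorem
  have hdiag : star x ⬝ᵥ A *ᵥ x =
      star (star U *ᵥ x) ⬝ᵥ diagonal (RCLike.ofReal ∘ hA.eigenvalues) *ᵥ (star U *ᵥ x) := by
    conv_lhs => rw [hA']
    rw [← mulVec_mulVec, ← mulVec_mulVec, dotProduct_mulVec, star_mulVec, star_eq_conjTranspose,
      conjTranspose_conjTranspose]
  rw [hdiag]
  simp only [dotProduct, mulVec_diagonal, Pi.star_apply, Function.comp_apply, map_sum]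
  refine Finset.sum_congr rfl fun i _ => ?_
  rw [RCLike.norm_sq_eq_def]
  simp only [RCLike.mul_re, RCLike.mul_im, RCLike.ofReal_re, RCLike.ofReal_im, RCLike.star_def,
    RCLike.conj_re, RCLike.conj_im]
  ring

theorem exists_finrank_eq_forall_pos_iff (hA : A.IsHermitian) (m : ℕ) :
    (∃ S : Submodule 𝕜 (ι → 𝕜), finrank 𝕜 S = m ∧
      ∀ x ∈ S, x ≠ 0 → 0 < RCLike.re (star x ⬝ᵥ A *ᵥ x)) ↔
      m ≤ {i | 0 < hA.eigenvalues i}.ncard := by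
  set e := UnitaryGroup.toLinearEquiv (star hA.eigenvectorUnitary)
  refine exists_finrank_eq_forall_iff_le_ncard e (fun x hx hx0 => ?_) (fun x hx _ => ?_) m
  · rw [re_star_dotProduct_mulVec hA]
    exact sum_mul_norm_sq_pos (fun i hi => hi) hx (e.map_ne_zero_iff.mpr hx0)
  · have := sum_mul_norm_sq_nonneg (w := -hA.eigenvalues) (y := e x)
      (fun i hi => neg_nonneg.mpr (not_lt.mp hi)) fun i hi => hx i (not_not.mp hi)
    rw [re_star_dotProduct_mulVec hA]
    simp only [Pi.neg_apply, neg_mul, Finset.sum_neg_distrib, neg_nonneg] at this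
    exact this.not_gt

theorem exists_finrank_eq_forall_nonneg_iff (hA : A.IsHermitian) (m : ℕ) :
    (∃ S : Submodule 𝕜 (ι → 𝕜), finrank 𝕜 S = m ∧
      ∀ x ∈ S, x ≠ 0 → 0 ≤ RCLike.re (star x ⬝ᵥ A *ᵥ x)) ↔
      m ≤ {i | 0 ≤ hA.eigenvalues i}.ncard := by
  set e := UnitaryGroup.toLinearEquiv (star hA.eigenvectorUnitary)
  refine exists_finrank_eq_forall_iff_le_ncard e (fun x hx _ => ?_) (fun x hx hx0 => ?_) m
  · rw [re_star_dotProduct_mulVec hA]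
    exact sum_mul_norm_sq_nonneg (fun i hi => hi) hx
  · have := sum_mul_norm_sq_pos (w := -hA.eigenvalues) (fun i hi => neg_pos.mpr (not_le.mp hi))
      (fun i hi => hx i (not_not.mp hi)) (e.map_ne_zero_iff.mpr hx0)
    rw [re_star_dotProduct_mulVec hA]
    simp only [Pi.neg_apply, neg_mul, Finset.sum_neg_distrib, neg_pos] at this
    exact this.not_ge

theorem finrank_ker_mulVecLin (hA : A.IsHermitian) :
    finrank 𝕜 (LinearMap.ker A.mulVecLin) = {i | hA.eigenvalues i = 0}.ncard := by
  have hrank : A.rank = {i | hA.eigenvalues i = 0}ᶜ.ncard := by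
    rw [hA.rank_eq_card_non_zero_eigs, ← Nat.card_eq_fintype_card]
    rfl
  have hnullity := LinearMap.finrank_range_add_finrank_ker A.mulVecLin
  have hsplit := Set.ncard_add_ncard_compl {i | hA.eigenvalues i = 0}
  rw [finrank_fintype_fun_eq_card, ← Nat.card_eq_fintype_card] at hnullity
  rw [rank] at hrank
  omega

end Matrix.IsHermitian

theorem Fin.natCard_le_and_lt {n p q : ℕ} (hq : q ≤ n) :
    Nat.card {k : Fin n // p ≤ k ∧ (k : ℕ) < q} = q - p := by
  rw [Nat.card_eq_fintype_card, Fintype.card_subtype, ← Finset.card_map Fin.valEmbedding,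
    ← Nat.card_Ico]
  congr 1
  ext m
  simp only [Finset.mem_map, Finset.mem_filter, Finset.mem_univ, true_and, Fin.valEmbedding_apply,
    Finset.mem_Ico]
  exact ⟨fun ⟨k, hk, hkm⟩ => hkm ▸ hk, fun hm => ⟨⟨m, by omega⟩, hm, rfl⟩⟩

theorem Fin.natCard_eq_sub_of_le_iff_of_lt_iff {α : Type*} [LinearOrder α] {n p q : ℕ}
    {l : Fin n → α} {c : α} (hq : q ≤ n) (hle : ∀ k : Fin n, l k ≤ c ↔ k + 1 ≤ q)
    (hlt : ∀ k : Fin n, l k < c ↔ k + 1 ≤ p) :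
    Nat.card {k : Fin n // l k = c} = q - p := by
  rw [← Fin.natCard_le_and_lt hq]
  exact Nat.card_congr <| Equiv.subtypeEquivRight fun k => by
    rw [eq_iff_le_not_lt, hle, hlt]
    omega

theorem star_smul_dotProduct_mulVec_smul {R ι : Type*} [Fintype ι] [CommSemiring R] [StarRing R]
    (M : Matrix ι ι R) (c : R) (x : ι → R) :
    star (c • x) ⬝ᵥ M *ᵥ (c • x) = (star c * c) * (star x ⬝ᵥ M *ᵥ x) := by
  rw [star_smul, mulVec_smul, smul_dotProduct, dotProduct_smul, smul_eq_mul, smul_eq_mul]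
  ring

section RayleighFunctional

variable {ι : Type*} [Fintype ι] {a b μ : ℝ} {T : ℝ → Matrix ι ι ℂ} {ρ : (ι → ℂ) → ℝ}
  {x : ι → ℂ}

theorem rayleigh_smul (hρmem : ∀ x : ι → ℂ, x ≠ 0 → ρ x ∈ Ioo a b)
    (hρroot : ∀ x : ι → ℂ, x ≠ 0 → star x ⬝ᵥ (T (ρ x)) *ᵥ x = 0)
    (hρuniq : ∀ x : ι → ℂ, x ≠ 0 → ∀ μ ∈ Ioo a b, star x ⬝ᵥ (T μ) *ᵥ x = 0 → μ = ρ x)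
    (hx : x ≠ 0) {c : ℂ} (hc : c ≠ 0) : ρ (c • x) = ρ x := by
  have hcx : c • x ≠ 0 := smul_ne_zero hc hx
  have hroot := hρroot (c • x) hcx
  rw [star_smul_dotProduct_mulVec_smul, mul_eq_zero] at hroot
  exact hρuniq x hx _ (hρmem _ hcx) (hroot.resolve_left (by simp [hc]))

theorem sign_re_star_dotProduct_mulVec_eq_sign_sub
    (hroot : star x ⬝ᵥ (T (ρ x)) *ᵥ x = 0)
    (hpos : μ ≠ ρ x → 0 < (μ - ρ x) * (star x ⬝ᵥ (T μ) *ᵥ x).re) :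
    SignType.sign (star x ⬝ᵥ (T μ) *ᵥ x).re = SignType.sign (μ - ρ x) := by
  rcases lt_trichotomy μ (ρ x) with h | rfl | h
  · rw [sign_neg (sub_neg.mpr h),
      sign_neg ((neg_iff_neg_of_mul_pos (hpos h.ne)).mp (sub_neg.mpr h))]
  · simp [hroot]
  · rw [sign_pos (sub_pos.mpr h),
      sign_pos ((pos_iff_pos_of_mul_pos (hpos h.ne')).mp (sub_pos.mpr h))]

theorem rayleigh_le_iff (hroot : star x ⬝ᵥ (T (ρ x)) *ᵥ x = 0)
    (hpos : μ ≠ ρ x → 0 < (μ - ρ x) * (star x ⬝ᵥ (T μ) *ᵥ x).re) :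
    ρ x ≤ μ ↔ 0 ≤ (star x ⬝ᵥ (T μ) *ᵥ x).re := by
  rw [← sub_nonneg, ← sign_nonneg_iff, ← sign_re_star_dotProduct_mulVec_eq_sign_sub hroot hpos,
    sign_nonneg_iff]

theorem rayleigh_lt_iff (hroot : star x ⬝ᵥ (T (ρ x)) *ᵥ x = 0)
    (hpos : μ ≠ ρ x → 0 < (μ - ρ x) * (star x ⬝ᵥ (T μ) *ᵥ x).re) :
    ρ x < μ ↔ 0 < (star x ⬝ᵥ (T μ) *ᵥ x).re := by
  rw [← sub_pos, ← sign_eq_one_iff, ← sign_re_star_dotProduct_mulVec_eq_sign_sub hroot hpos,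
    sign_eq_one_iff]

end RayleighFunctional

theorem exactly_n_eigenvalues_positive_type_general
    (n : ℕ) (a b : ℝ)
    (T : ℝ → Matrix (Fin n) (Fin n) ℂ)
    (hTherm : ∀ μ ∈ Set.Icc a b, (T μ).IsHermitian)
    (ρ : (Fin n → ℂ) → ℝ)
    (hρcont : ContinuousOn ρ {x : Fin n → ℂ | x ≠ 0})
    (hρmem : ∀ x : Fin n → ℂ, x ≠ 0 → ρ x ∈ Set.Ioo a b)
    (hρroot : ∀ x : Fin n → ℂ, x ≠ 0 → star x ⬝ᵥ (T (ρ x)) *ᵥ x = 0)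
    (hρuniq : ∀ x : Fin n → ℂ, x ≠ 0 → ∀ μ ∈ Set.Ioo a b,
      star x ⬝ᵥ (T μ) *ᵥ x = 0 → μ = ρ x)
    (hpos : ∀ x : Fin n → ℂ, x ≠ 0 → ∀ μ ∈ Set.Ioo a b, μ ≠ ρ x →
      0 < (μ - ρ x) * (star x ⬝ᵥ (T μ) *ᵥ x).re)
    (lam : Fin n → ℝ)
    (hlam : ∀ k : Fin n,
      IsLeast {r : ℝ | ∃ S : Submodule ℂ (Fin n → ℂ), Module.finrank ℂ S = (k : ℕ) + 1 ∧
        IsGreatest (ρ '' {x : Fin n → ℂ | x ∈ S ∧ x ≠ 0}) r} (lam k)) :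
    ∀ μ₀ ∈ Set.Ioo a b, (∃ v : Fin n → ℂ, v ≠ 0 ∧ (T μ₀) *ᵥ v = 0) →
      (∃ k : Fin n, lam k = μ₀) ∧
      Nat.card {k : Fin n // lam k = μ₀} =
        Module.finrank ℂ (LinearMap.ker (T μ₀).mulVecLin) := by
  rintro μ₀ hμ₀ ⟨v, hv0, hv⟩
  have hA := hTherm μ₀ (Ioo_subset_Icc_self hμ₀)
  have hmax (k : Fin n) (S : Submodule ℂ (Fin n → ℂ)) (hS : finrank ℂ S = k + 1) :=
    exists_isGreatest_image_of_smul_invariant hρcont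
      (fun x hx c hc => rayleigh_smul hρmem hρroot hρuniq hx hc) (S := S)
      (by rintro rfl; simp at hS)
  have hle (k : Fin n) : lam k ≤ μ₀ ↔ k + 1 ≤ {i | 0 ≤ hA.eigenvalues i}.ncard := by
    rw [le_iff_exists_forall_le_of_isLeast (hlam k) (hmax k),
      ← hA.exists_finrank_eq_forall_nonneg_iff]
    exact exists_congr fun S => and_congr_right fun _ => forall₂_congr fun x _ =>
      forall_congr' fun hx => rayleigh_le_iff (hρroot x hx) (hpos x hx μ₀ hμ₀)
  have hlt (k : Fin n) : lam k < μ₀ ↔ k + 1 ≤ {i | 0 < hA.eigenvalues i}.ncard := by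
    rw [lt_iff_exists_forall_lt_of_isLeast (hlam k) (hmax k),
      ← hA.exists_finrank_eq_forall_pos_iff]
    exact exists_congr fun S => and_congr_right fun _ => forall₂_congr fun x _ =>
      forall_congr' fun hx => rayleigh_lt_iff (hρroot x hx) (hpos x hx μ₀ hμ₀)
  have hcount : Nat.card {k : Fin n // lam k = μ₀} =
      finrank ℂ (LinearMap.ker (T μ₀).mulVecLin) := by
    have hq : {i | 0 ≤ hA.eigenvalues i}.ncard ≤ n := by
      simpa using Set.ncard_le_card {i | 0 ≤ hA.eigenvalues i}
    rw [Fin.natCard_eq_sub_of_le_iff_of_lt_iff hq hle hlt,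
      ncard_nonneg_eq_ncard_pos_add_ncard_zero, hA.finrank_ker_mulVecLin, Nat.add_sub_cancel_left]
  have hker : 0 < finrank ℂ (LinearMap.ker (T μ₀).mulVecLin) :=
    finrank_pos_iff_exists_ne_zero.mpr ⟨⟨v, hv⟩, fun h => hv0 (congrArg Subtype.val h)⟩
  obtain ⟨⟨k, hk⟩⟩ := (Nat.card_pos_iff.mp (hcount ▸ hker)).1
  exact ⟨⟨k, hk⟩, hcount⟩

/-- on an interval `(a,b)` of positive type (with `T` continuously
differentiable there), letting `lam k` be the minimum over `(k+1)`-dimensional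
subspaces `S` of the maximum of `ρ` over nonzero `x ∈ S` (zero-based `k : Fin n`),
the map `T(·)` has exactly `n` eigenvalues in `(a,b)` counted with multiplicity:
every eigenvalue `μ₀ ∈ (a,b)` equals `lam k` for some `k`, and the number of
indices `k` with `lam k = μ₀` equals the dimension of the kernel of `T μ₀`. -/
theorem exactly_n_eigenvalues_positive_type
    (n : ℕ) (hn : 1 ≤ n) (a b : ℝ) (hab : a < b)
    (T T' : ℝ → Matrix (Fin n) (Fin n) ℂ)
    (hTcont : ContinuousOn T (Set.Icc a b))
    (hTherm : ∀ μ ∈ Set.Icc a b, (T μ).IsHermitian)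
    (hT'deriv : ∀ μ ∈ Set.Ioo a b, ∀ i j : Fin n,
      HasDerivAt (fun t : ℝ => T t i j) (T' μ i j) μ)
    (hT'cont : ContinuousOn T' (Set.Ioo a b))
    (ρ : (Fin n → ℂ) → ℝ)
    (hρcont : ContinuousOn ρ {x : Fin n → ℂ | x ≠ 0})
    (hρmem : ∀ x : Fin n → ℂ, x ≠ 0 → ρ x ∈ Set.Ioo a b)
    (hρroot : ∀ x : Fin n → ℂ, x ≠ 0 → star x ⬝ᵥ (T (ρ x)) *ᵥ x = 0)
    (hρuniq : ∀ x : Fin n → ℂ, x ≠ 0 → ∀ μ ∈ Set.Ioo a b,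
      star x ⬝ᵥ (T μ) *ᵥ x = 0 → μ = ρ x)
    (hpos : ∀ x : Fin n → ℂ, x ≠ 0 → ∀ μ ∈ Set.Ioo a b, μ ≠ ρ x →
      0 < (μ - ρ x) * (star x ⬝ᵥ (T μ) *ᵥ x).re)
    (lam : Fin n → ℝ)
    (hlam : ∀ k : Fin n,
      IsLeast {r : ℝ | ∃ S : Submodule ℂ (Fin n → ℂ), Module.finrank ℂ S = (k : ℕ) + 1 ∧
        IsGreatest (ρ '' {x : Fin n → ℂ | x ∈ S ∧ x ≠ 0}) r} (lam k)) :
    ∀ μ₀ ∈ Set.Ioo a b, (∃ v : Fin n → ℂ, v ≠ 0 ∧ (T μ₀) *ᵥ v = 0) →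
      (∃ k : Fin n, lam k = μ₀) ∧
      Nat.card {k : Fin n // lam k = μ₀} =
        Module.finrank ℂ (LinearMap.ker (T μ₀).mulVecLin) :=
  exactly_n_eigenvalues_positive_type_general n a b T hTherm ρ hρcont hρmem hρroot hρuniq hpos lam
    hlam
end

section
/- The stabilized preconditioner satisfies the identities M_Π† Π = M_Π† and Π* M_Π† = M_Π†. -/
/-! Both identities come down to the fact that the stabilized preconditioner annihilates `w`
on either side: `M_Π† w = 0` and `w* M_Π† = 0`, since the rank-one correction removes exactly the
component of `M⁻¹` seen by `w`. As `I − Π` and `I − Π*` are multiples of `w x*` and `x w*`,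
multiplying by `Π` on the right or by `Π*` on the left then changes nothing. -/

open Matrix

namespace Matrix

lemma conjTranspose_one_sub_smul_vecMulVec {m K : Type*} [DecidableEq m] [CommRing K]
    [StarRing K] (a : K) (u v : m → K) :
    (1 - a • vecMulVec u v)ᴴ = 1 - star a • vecMulVec (star v) (star u) := by
  rw [conjTranspose_sub, conjTranspose_one, conjTranspose_smul, conjTranspose_vecMulVec]

variable {m K : Type*} [Fintype m] [DecidableEq m]

section CommRing

variable [CommRing K]

lemma mul_one_sub_smul_vecMulVec_of_mulVec_eq_zero {A : Matrix m m K} {w : m → K}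
    (h : A *ᵥ w = 0) (a : K) (v : m → K) : A * (1 - a • vecMulVec w v) = A := by
  rw [Matrix.mul_sub, mul_one, Matrix.mul_smul, mul_vecMulVec, h, zero_vecMulVec, smul_zero,
    sub_zero]

lemma one_sub_smul_vecMulVec_mul_of_vecMul_eq_zero {A : Matrix m m K} {v : m → K}
    (h : v ᵥ* A = 0) (a : K) (u : m → K) : (1 - a • vecMulVec u v) * A = A := by
  rw [Matrix.sub_mul, one_mul, Matrix.smul_mul, vecMulVec_mul, h, vecMulVec_zero, smul_zero,
    sub_zero]

end CommRing

section Field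

variable [Field K]

lemma one_sub_inv_smul_vecMulVec_mul_mulVec_eq_zero (B : Matrix m m K) {u w : m → K}
    (h : u ⬝ᵥ B *ᵥ w ≠ 0) :
    ((1 - (u ⬝ᵥ B *ᵥ w)⁻¹ • vecMulVec (B *ᵥ w) u) * B) *ᵥ w = 0 := by
  rw [← mulVec_mulVec, sub_mulVec, one_mulVec, smul_mulVec, vecMulVec_mulVec, op_smul_eq_smul,
    smul_smul, inv_mul_cancel₀ h, one_smul, sub_self]

lemma vecMul_one_sub_inv_smul_vecMulVec_mul_eq_zero (B : Matrix m m K) {u w : m → K}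
    (h : u ⬝ᵥ B *ᵥ w ≠ 0) :
    u ᵥ* ((1 - (u ⬝ᵥ B *ᵥ w)⁻¹ • vecMulVec (B *ᵥ w) u) * B) = 0 := by
  rw [Matrix.sub_mul, one_mul, Matrix.smul_mul, vecMulVec_mul, vecMul_sub, vecMul_smul,
    vecMul_vecMulVec, smul_smul, inv_mul_cancel₀ h, one_smul, sub_self]

end Field

end Matrix

theorem stabilized_preconditioner_projector_identities_general
    (n : ℕ) (M : Matrix (Fin n) (Fin n) ℂ)
    (x w : Fin n → ℂ)
    (hwMw : star w ⬝ᵥ M⁻¹ *ᵥ w ≠ 0)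
    (P : Matrix (Fin n) (Fin n) ℂ)
    (hP : P = 1 - (star x ⬝ᵥ w)⁻¹ • vecMulVec w (star x))
    (MPd : Matrix (Fin n) (Fin n) ℂ)
    (hMPd : MPd = (1 - (star w ⬝ᵥ M⁻¹ *ᵥ w)⁻¹ • vecMulVec (M⁻¹ *ᵥ w) (star w)) * M⁻¹) :
    MPd * P = MPd ∧ Pᴴ * MPd = MPd := by
  have hMPd_w : MPd *ᵥ w = 0 := hMPd ▸ one_sub_inv_smul_vecMulVec_mul_mulVec_eq_zero M⁻¹ hwMw
  have hw_MPd : star w ᵥ* MPd = 0 :=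
    hMPd ▸ vecMul_one_sub_inv_smul_vecMulVec_mul_eq_zero M⁻¹ hwMw
  subst hP
  refine ⟨mul_one_sub_smul_vecMulVec_of_mulVec_eq_zero hMPd_w _ _, ?_⟩
  rw [conjTranspose_one_sub_smul_vecMulVec, star_star]
  exact one_sub_smul_vecMulVec_mul_of_vecMul_eq_zero hw_MPd _ _

/-- with `Π = I − (w x*)/(x*w)` and
`M_Π† = (I − (M⁻¹w w*)/(w*M⁻¹w)) M⁻¹`, the stabilized preconditioner satisfies
`M_Π† Π = M_Π†` and `Π* M_Π† = M_Π†`. -/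
theorem stabilized_preconditioner_projector_identities
    (n : ℕ) (M : Matrix (Fin n) (Fin n) ℂ) (hM : IsUnit M.det)
    (x w : Fin n → ℂ)
    (hxw : star x ⬝ᵥ w ≠ 0)
    (hwMw : star w ⬝ᵥ M⁻¹ *ᵥ w ≠ 0)
    (P : Matrix (Fin n) (Fin n) ℂ)
    (hP : P = 1 - (star x ⬝ᵥ w)⁻¹ • vecMulVec w (star x))
    (MPd : Matrix (Fin n) (Fin n) ℂ)
    (hMPd : MPd = (1 - (star w ⬝ᵥ M⁻¹ *ᵥ w)⁻¹ • vecMulVec (M⁻¹ *ᵥ w) (star w)) * M⁻¹) :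
    MPd * P = MPd ∧ Pᴴ * MPd = MPd :=
  stabilized_preconditioner_projector_identities_general n M x w hwMw P hP MPd hMPd
end
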